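/- Let d = 2n and let w = (π, λ) satisfy the GSp(2n) conditions π ∘ ι = ι ∘ π and λ_j + λ_{ι(j)} = 1 for all j (where ι(j) = 2n+1−j), and assume Λ_l ⊇ w(Λ_l) ⊇ tΛ_l for all l. Set L_i = w(Λ_i). Then for every i ∈ {1,…,2n}, the induced map L_i/tΛ_i → Λ_{i−1}/tΛ_{i−1} is injective if and only if L_{ι(i)−1} ⊄ Λ_{ι(i)}; that is, the étale condition at index i is exchanged by the duality ι with the multiplicative condition at index ι(i). -/

import Mathlib

noncomputable section

variable (k : Type*) [Field k] (d : ℕ)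

/-- The element `t` of `K = k((t))`, as a Laurent series. -/
def tK : LaurentSeries k := HahnSeries.single 1 1

/-- The monomial `t^m` of `K = k((t))`, for `m : ℤ`. -/
def tpow (m : ℤ) : LaurentSeries k := HahnSeries.single m 1

/-- The standard basis vector `e_j` of `K^d` (0-indexed: `e_j` here is `e_{j+1}` of the paper). -/
def stdVec (j : Fin d) : Fin d → LaurentSeries k := Pi.single j 1

/-- The standard lattice `Λ_i ⊆ K^d`: the `O = k[[t]]`-submodule generated by
`t e_1, …, t e_i, e_{i+1}, …, e_d` (0-indexed). -/
def Lam (i : ℕ) : Submodule (PowerSeries k) (Fin d → LaurentSeries k) :=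
  Submodule.span _ (Set.range fun j : Fin d =>
    if (j : ℕ) < i then tK k • stdVec k d j else stdVec k d j)

/-- Multiplication by `t` on `K^d`, as an `O`-linear endomorphism. -/
def tMul : (Fin d → LaurentSeries k) →ₗ[PowerSeries k] (Fin d → LaurentSeries k) :=
  (LinearMap.lsmul (LaurentSeries k) (Fin d → LaurentSeries k) (tK k)).restrictScalars
    (PowerSeries k)

/-- The lattice `tΛ_i`. -/
def tLam (i : ℕ) : Submodule (PowerSeries k) (Fin d → LaurentSeries k) :=
  (Lam k d i).map (tMul k d)

/-- The `K`-linear action of `w = (π, λ)` on `K^d`, determined by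
`w(e_j) = t^{λ_j} e_{π(j)}`. -/
def wMap (π : Equiv.Perm (Fin d)) (lam : Fin d → ℤ) :
    (Fin d → LaurentSeries k) →ₗ[LaurentSeries k] (Fin d → LaurentSeries k) :=
  (Pi.basisFun (LaurentSeries k) (Fin d)).constr (LaurentSeries k)
    fun j => tpow k (lam j) • stdVec k d (π j)

/-- The lattice `w(Λ_i)`. -/
def wLam (π : Equiv.Perm (Fin d)) (lam : Fin d → ℤ) (i : ℕ) :
    Submodule (PowerSeries k) (Fin d → LaurentSeries k) :=
  (Lam k d i).map ((wMap k d π lam).restrictScalars (PowerSeries k))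

/-! ### Auxiliary lemmas -/

section Aux

lemma tpow_ne_zero (a : ℤ) : tpow k a ≠ 0 := HahnSeries.single_ne_zero one_ne_zero

lemma order_tpow (a : ℤ) : (tpow k a).order = a := HahnSeries.order_single one_ne_zero

lemma tpow_mul_tpow (a b : ℤ) : tpow k a * tpow k b = tpow k (a + b) := by
  simp [tpow, HahnSeries.single_mul_single]

lemma order_coe_nonneg {s : PowerSeries k} (hs : s ≠ 0) :
    0 ≤ ((s : LaurentSeries k)).order := by
  by_contra hneg
  push_neg at hneg
  have h1 : ((s : LaurentSeries k)) ≠ 0 := by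
    simpa using (HahnSeries.ofPowerSeries_injective (Γ := ℤ)).ne_iff.mpr hs
  have := mt HahnSeries.coeff_order_eq_zero.mp h1
  rw [PowerSeries.coeff_coe, if_pos hneg] at this
  exact this rfl

lemma mem_span_tpow (x : LaurentSeries k) (a : ℤ) :
    x ∈ Submodule.span (PowerSeries k) {tpow k a} ↔ x = 0 ∨ a ≤ x.order := by
  rw [Submodule.mem_span_singleton]
  constructor
  · rintro ⟨s, rfl⟩
    rcases eq_or_ne s 0 with rfl | hs
    · left; simp
    · right
      have h1 : ((s : LaurentSeries k)) ≠ 0 := by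
        simpa using (HahnSeries.ofPowerSeries_injective (Γ := ℤ)).ne_iff.mpr hs
      rw [Algebra.smul_def, LaurentSeries.coe_algebraMap]
      rw [show (HahnSeries.ofPowerSeries ℤ k) s = (s : LaurentSeries k) from rfl]
      rw [HahnSeries.order_mul h1 (tpow_ne_zero k a), order_tpow]
      linarith [order_coe_nonneg k hs]
  · rintro (rfl | hle)
    · exact ⟨0, by simp⟩
    · rcases eq_or_ne x 0 with rfl | hx
      · exact ⟨0, by simp⟩
      refine ⟨PowerSeries.X ^ (x.order - a).toNat * x.powerSeriesPart, ?_⟩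
      rw [Algebra.smul_def, LaurentSeries.coe_algebraMap, map_mul, map_pow,
        HahnSeries.ofPowerSeries_X]
      have h2 : (HahnSeries.single (1:ℤ) (1:k)) ^ (x.order - a).toNat = tpow k (x.order - a) := by
        rw [HahnSeries.single_pow]
        simp [tpow, Int.toNat_of_nonneg (sub_nonneg.mpr hle)]
      rw [h2]
      have h3 := x.single_order_mul_powerSeriesPart
      calc tpow k (x.order - a) * (HahnSeries.ofPowerSeries ℤ k) x.powerSeriesPart * tpow k a
          = tpow k (x.order - a) * tpow k a * (HahnSeries.ofPowerSeries ℤ k) x.powerSeriesPart := by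
            ring
        _ = x := by rw [tpow_mul_tpow, sub_add_cancel]; exact h3

/-- A "diagonal" lattice with exponents `c`. -/
def DMod (c : Fin d → ℤ) : Submodule (PowerSeries k) (Fin d → LaurentSeries k) :=
  Submodule.pi Set.univ fun j => Submodule.span (PowerSeries k) {tpow k (c j)}

lemma mem_DMod (c : Fin d → ℤ) (x : Fin d → LaurentSeries k) :
    x ∈ DMod k d c ↔ ∀ j, x j = 0 ∨ c j ≤ (x j).order := by
  rw [DMod, Submodule.mem_pi]
  exact ⟨fun H j => (mem_span_tpow k _ _).mp (H j trivial),
    fun H j _ => (mem_span_tpow k _ _).mpr (H j)⟩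

lemma single_mem_DMod (c : Fin d → ℤ) (j : Fin d) (a : ℤ) (ha : c j ≤ a) :
    (Pi.single j (tpow k a) : Fin d → LaurentSeries k) ∈ DMod k d c := by
  rw [mem_DMod]
  intro j'
  rcases eq_or_ne j' j with rfl | hne
  · right; rw [Pi.single_eq_same, order_tpow]; exact ha
  · left; exact Pi.single_eq_of_ne hne _

lemma pi_single_smul (j : Fin d) (s : PowerSeries k) (v : LaurentSeries k) :
    (Pi.single j (s • v) : Fin d → LaurentSeries k)
      = s • (Pi.single j v : Fin d → LaurentSeries k) := by
  funext j'
  rcases eq_or_ne j' j with rfl | hne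
  · simp
  · rw [Pi.single_eq_of_ne hne, Pi.smul_apply, Pi.single_eq_of_ne hne]
    exact (smul_zero (A := LaurentSeries k) s).symm

lemma pi_single_smulK (j : Fin d) (s v : LaurentSeries k) :
    (Pi.single j (s * v) : Fin d → LaurentSeries k)
      = s • (Pi.single j v : Fin d → LaurentSeries k) := by
  funext j'
  rcases eq_or_ne j' j with rfl | hne
  · simp
  · rw [Pi.single_eq_of_ne hne, Pi.smul_apply, Pi.single_eq_of_ne hne, smul_eq_mul, mul_zero]

lemma span_single_range (f : Fin d → LaurentSeries k) :
    Submodule.span (PowerSeries k) (Set.range fun j => Pi.single j (f j)) =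
      Submodule.pi Set.univ fun j => Submodule.span (PowerSeries k) {f j} := by
  apply le_antisymm
  · rw [Submodule.span_le]
    rintro _ ⟨j, rfl⟩
    rw [SetLike.mem_coe, Submodule.mem_pi]
    intro j' _
    dsimp only
    rcases eq_or_ne j' j with rfl | hne
    · rw [Pi.single_eq_same]; exact Submodule.mem_span_singleton_self _
    · rw [Pi.single_eq_of_ne hne]; exact Submodule.zero_mem _
  · intro x hx
    rw [Submodule.mem_pi] at hx
    have hsum : x = ∑ j, Pi.single j (x j) := (Finset.univ_sum_single x).symm
    rw [hsum]
    apply Submodule.sum_mem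
    intro j _
    obtain ⟨s, hs⟩ := Submodule.mem_span_singleton.mp (hx j trivial)
    rw [← hs, pi_single_smul]
    exact Submodule.smul_mem _ _ (Submodule.subset_span ⟨j, rfl⟩)

/-- Indicator exponent of `Λ_i`. -/
def expL (i : ℕ) (j : Fin d) : ℤ := if (j : ℕ) < i then 1 else 0

lemma Lam_eq (i : ℕ) : Lam k d i = DMod k d (expL d i) := by
  rw [Lam, DMod, ← span_single_range]
  congr 1
  apply congrArg
  funext j
  rw [expL]
  split_ifs with hj
  · rw [show tpow k 1 = tK k * 1 from (mul_one _).symm, pi_single_smulK]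
    rfl
  · rw [show tpow k 0 = (1 : LaurentSeries k) from HahnSeries.single_zero_one]
    rfl

lemma tLam_eq (i : ℕ) : tLam k d i = DMod k d (fun j => expL d i j + 1) := by
  rw [tLam, Lam, Submodule.map_span, ← Set.range_comp, DMod, ← span_single_range]
  congr 1
  apply congrArg
  funext j
  have ht : ∀ v : Fin d → LaurentSeries k, tMul k d v = tK k • v := fun _ => rfl
  show tMul k d (if (j : ℕ) < i then tK k • stdVec k d j else stdVec k d j)
    = Pi.single j (tpow k (expL d i j + 1))
  rw [expL]
  split_ifs with hj
  · rw [ht, stdVec]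
    rw [show tpow k ((1 : ℤ) + 1) = tK k * (tK k * 1) by
      rw [mul_one]; rw [show tK k = tpow k 1 from rfl, tpow_mul_tpow]]
    rw [pi_single_smulK, pi_single_smulK]
  · rw [ht, stdVec]
    rw [show tpow k ((0 : ℤ) + 1) = tK k * 1 by
      rw [mul_one, zero_add]; rfl]
    rw [pi_single_smulK]

lemma wMap_single (π : Equiv.Perm (Fin d)) (lam : Fin d → ℤ) (j : Fin d) (a : ℤ) :
    wMap k d π lam (Pi.single j (tpow k a)) = Pi.single (π j) (tpow k (a + lam j)) := by
  have hb : (Pi.basisFun (LaurentSeries k) (Fin d)) j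
      = (Pi.single j 1 : Fin d → LaurentSeries k) := by
    simp [Pi.basisFun_apply]
  have h1 : (Pi.single j (tpow k a) : Fin d → LaurentSeries k)
      = tpow k a • Pi.basisFun (LaurentSeries k) (Fin d) j := by
    rw [hb, ← pi_single_smulK, mul_one]
  rw [h1, map_smul, wMap, Module.Basis.constr_basis, stdVec, ← pi_single_smulK, mul_one,
    show tpow k (a + lam j) = tpow k a * tpow k (lam j) from (tpow_mul_tpow k a (lam j)).symm,
    pi_single_smulK]

lemma wLam_eq (π : Equiv.Perm (Fin d)) (lam : Fin d → ℤ) (i : ℕ) :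
    wLam k d π lam i =
      DMod k d (fun j => expL d i (π.symm j) + lam (π.symm j)) := by
  rw [wLam, Lam_eq, DMod, ← span_single_range, Submodule.map_span, ← Set.range_comp,
    DMod, ← span_single_range]
  congr 1
  have key : (⇑((wMap k d π lam).restrictScalars (PowerSeries k)) ∘
      fun j => (Pi.single j (tpow k (expL d i j)) : Fin d → LaurentSeries k))
      = (fun j : Fin d => (Pi.single j (tpow k (expL d i (π.symm j) + lam (π.symm j)))
          : Fin d → LaurentSeries k)) ∘ π := by
    funext j
    show wMap k d π lam (Pi.single j (tpow k (expL d i j)))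
      = Pi.single (π j) (tpow k (expL d i (π.symm (π j)) + lam (π.symm (π j))))
    rw [Equiv.symm_apply_apply, wMap_single]
  rw [key, Set.range_comp, Equiv.range_eq_univ, Set.image_univ]

lemma expL_of_lt {l : ℕ} {j : Fin d} (hj : (j : ℕ) < l) : expL d l j = 1 := if_pos hj

lemma expL_of_ge {l : ℕ} {j : Fin d} (hj : ¬ (j : ℕ) < l) : expL d l j = 0 := if_neg hj

lemma expL_nonneg (l : ℕ) (j : Fin d) : 0 ≤ expL d l j := by
  rw [expL]; split_ifs <;> norm_num

lemma expL_le_one (l : ℕ) (j : Fin d) : expL d l j ≤ 1 := by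
  rw [expL]; split_ifs <;> norm_num

lemma DMod_le_iff (c c' : Fin d → ℤ) : DMod k d c ≤ DMod k d c' ↔ ∀ j, c' j ≤ c j := by
  constructor
  · intro H j
    have hm := H (single_mem_DMod k d c j (c j) le_rfl)
    rw [mem_DMod] at hm
    rcases hm j with h0 | h1
    · rw [Pi.single_eq_same] at h0
      exact absurd h0 (tpow_ne_zero k _)
    · rwa [Pi.single_eq_same, order_tpow] at h1
  · intro H x hx
    rw [mem_DMod] at hx ⊢
    intro j
    rcases hx j with h0 | h1
    · exact Or.inl h0
    · exact Or.inr (le_trans (H j) h1)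

end Aux

/-- (0-indexed, `d = 2n`; for `i ∈ {1,…,2n}` of the paper with
`ι(i) = 2n+1-i`, the index pair `(i-1, i)` becomes `(i, i+1)` with `i : Fin (2n)`,
and `(ι(i)-1, ι(i))` becomes `(i.rev, i.rev+1)`.) Let `w = (π, λ)` satisfy the
`GSp(2n)` conditions and assume `Λ_l ⊇ w(Λ_l) ⊇ tΛ_l` for all `l`. With
`L_l = w(Λ_l)`, the induced map `L_i/tΛ_i → Λ_{i-1}/tΛ_{i-1}` is injective iff
`L_{ι(i)-1} ⊄ Λ_{ι(i)}`: the étale condition at `i` is exchanged by the duality `ι`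
with the multiplicative condition at `ι(i)`. -/
theorem stmt12 (n : ℕ) (π : Equiv.Perm (Fin (2 * n))) (lam : Fin (2 * n) → ℤ)
    (hcomm : ∀ j, π j.rev = (π j).rev)
    (hsum : ∀ j, lam j + lam j.rev = 1)
    (h : ∀ l : ℕ, l ≤ 2 * n →
      wLam k (2 * n) π lam l ≤ Lam k (2 * n) l ∧
        tLam k (2 * n) l ≤ wLam k (2 * n) π lam l)
    (i : Fin (2 * n)) :
    (∀ x ∈ wLam k (2 * n) π lam ((i : ℕ) + 1),
        x ∈ tLam k (2 * n) (i : ℕ) → x ∈ tLam k (2 * n) ((i : ℕ) + 1)) ↔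
      ¬ (wLam k (2 * n) π lam ((i.rev : ℕ)) ≤ Lam k (2 * n) ((i.rev : ℕ) + 1)) := by
  have hA : ∀ l : ℕ, l ≤ 2 * n → ∀ j : Fin (2 * n),
      expL (2 * n) l (π j) ≤ lam j + expL (2 * n) l j := by
    intro l hl j
    have h1 := (h l hl).1
    rw [wLam_eq, Lam_eq, DMod_le_iff] at h1
    have h2 := h1 (π j)
    rw [Equiv.symm_apply_apply] at h2
    linarith
  have hlam0 : ∀ j, 0 ≤ lam j := by
    intro j
    have h2 := hA 0 (Nat.zero_le _) j
    rw [expL_of_ge _ (Nat.not_lt_zero _), expL_of_ge _ (Nat.not_lt_zero _)] at h2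
    linarith
  have hlam1 : ∀ j, lam j ≤ 1 := by
    intro j
    have h1 := (h 0 (Nat.zero_le _)).2
    rw [tLam_eq, wLam_eq, DMod_le_iff] at h1
    have h2 := h1 (π j)
    rw [Equiv.symm_apply_apply, expL_of_ge _ (Nat.not_lt_zero _),
      expL_of_ge _ (Nat.not_lt_zero _)] at h2
    linarith
  have hval_rev : ∀ j : Fin (2 * n), (j.rev : ℕ) = 2 * n - 1 - (j : ℕ) := by
    intro j
    rw [Fin.val_rev]
    omega
  have hrevsymm : π.symm i.rev = (π.symm i).rev := by
    have hc := hcomm (π.symm i)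
    rw [Equiv.apply_symm_apply] at hc
    rw [← hc, Equiv.symm_apply_apply]
  have hLHS : (∀ x ∈ wLam k (2 * n) π lam ((i : ℕ) + 1),
      x ∈ tLam k (2 * n) (i : ℕ) → x ∈ tLam k (2 * n) ((i : ℕ) + 1)) ↔
      (lam (π.symm i) = 1 ∧ ((π.symm i : Fin (2 * n)) : ℕ) ≤ (i : ℕ)) := by
    constructor
    · intro hL
      by_contra hP
      rw [not_and_or] at hP
      have hw1 : (Pi.single i (tpow k 1) : Fin (2 * n) → LaurentSeries k)
          ∈ wLam k (2 * n) π lam ((i : ℕ) + 1) := by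
        rw [wLam_eq, mem_DMod]
        intro j'
        rcases eq_or_ne j' i with rfl | hne
        · right
          rw [Pi.single_eq_same, order_tpow]
          rcases hP with hP | hP
          · have hz : lam (π.symm j') = 0 := by
              have := hlam0 (π.symm j'); have := hlam1 (π.symm j'); omega
            have := expL_le_one (2 * n) ((j' : ℕ) + 1) (π.symm j')
            omega
          · push_neg at hP
            rw [expL_of_ge _ (by omega)]
            have := hlam1 (π.symm j')
            omega
        · exact Or.inl (Pi.single_eq_of_ne hne _)
      have ht1 : (Pi.single i (tpow k 1) : Fin (2 * n) → LaurentSeries k)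
          ∈ tLam k (2 * n) (i : ℕ) := by
        rw [tLam_eq, mem_DMod]
        intro j'
        rcases eq_or_ne j' i with rfl | hne
        · right
          rw [Pi.single_eq_same, order_tpow, expL_of_ge _ (lt_irrefl _)]
          norm_num
        · exact Or.inl (Pi.single_eq_of_ne hne _)
      have hx := hL _ hw1 ht1
      rw [tLam_eq, mem_DMod] at hx
      have hxi := hx i
      rw [Pi.single_eq_same, order_tpow, expL_of_lt _ (by omega)] at hxi
      rcases hxi with hxi | hxi
      · exact tpow_ne_zero k 1 hxi
      · omega
    · rintro ⟨hl1, hle⟩ x hxw hxt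
      rw [wLam_eq, mem_DMod] at hxw
      rw [tLam_eq, mem_DMod] at hxt
      rw [tLam_eq, mem_DMod]
      intro j'
      rcases eq_or_ne (x j') 0 with h0 | h0
      · exact Or.inl h0
      right
      have o2 := (hxt j').resolve_left h0
      rcases eq_or_ne j' i with rfl | hne
      · have o1 := (hxw j').resolve_left h0
        rw [expL_of_lt _ (show ((π.symm j' : Fin (2 * n)) : ℕ) < (j' : ℕ) + 1 by omega),
          hl1] at o1
        rw [expL_of_lt _ (by omega)]
        omega
      · have hvne : (j' : ℕ) ≠ (i : ℕ) := fun hc => hne (Fin.ext hc)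
        have he : expL (2 * n) ((i : ℕ) + 1) j' = expL (2 * n) (i : ℕ) j' := by
          rw [expL, expL]
          split_ifs <;> omega
        rw [he]
        exact o2
  have hRHS : (¬ (wLam k (2 * n) π lam ((i.rev : ℕ)) ≤ Lam k (2 * n) ((i.rev : ℕ) + 1))) ↔
      (lam (π.symm i) = 1 ∧ ((π.symm i : Fin (2 * n)) : ℕ) ≤ (i : ℕ)) := by
    rw [wLam_eq, Lam_eq, DMod_le_iff]
    constructor
    · intro hn
      by_contra hP
      apply hn
      rw [not_and_or] at hP
      intro j'
      by_cases hc1 : (j' : ℕ) < (i.rev : ℕ)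
      · have h2 := hA (i.rev : ℕ) (le_of_lt i.rev.isLt) (π.symm j')
        rw [Equiv.apply_symm_apply, expL_of_lt _ hc1] at h2
        rw [expL_of_lt _ (by omega)]
        linarith
      by_cases hc2 : (j' : ℕ) = (i.rev : ℕ)
      · have hj' : j' = i.rev := Fin.ext hc2
        subst hj'
        rw [hrevsymm, expL_of_lt _ (by omega)]
        rcases hP with hP | hP
        · have hz : lam (π.symm i) = 0 := by
            have := hlam0 (π.symm i); have := hlam1 (π.symm i); omega
          have h1 : lam (π.symm i).rev = 1 := by
            have := hsum (π.symm i); omega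
          have := expL_nonneg (2 * n) ((i.rev : Fin (2 * n)) : ℕ) (π.symm i).rev
          omega
        · push_neg at hP
          have hlt : ((π.symm i).rev : ℕ) < (i.rev : ℕ) := by
            have : (π.symm i).rev < i.rev := Fin.rev_lt_rev.mpr (Fin.lt_def.mpr hP)
            exact Fin.lt_def.mp this
          rw [expL_of_lt _ hlt]
          have := hlam0 (π.symm i).rev
          omega
      · rw [expL_of_ge _ (by omega)]
        have := hlam0 (π.symm j')
        have := expL_nonneg (2 * n) (i.rev : ℕ) (π.symm j')
        omega
    · rintro ⟨hl1, hle⟩ hall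
      have h2 := hall i.rev
      rw [hrevsymm, expL_of_lt _ (Nat.lt_succ_self _)] at h2
      have hz : lam (π.symm i).rev = 0 := by
        have := hsum (π.symm i); omega
      have hge : expL (2 * n) (i.rev : ℕ) (π.symm i).rev = 0 := by
        apply expL_of_ge
        have hr : i.rev ≤ (π.symm i).rev := Fin.rev_le_rev.mpr (Fin.le_def.mpr hle)
        have := Fin.le_def.mp hr
        omega
      omega
  rw [hLHS, hRHS]

end
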